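/- arXiv:math/0003204 — 3 statements merged into one kernel-verified Lean document; each statement's English description precedes it below -/
import Mathlib

section
/- Let σ and τ be closed convex cones in ℝⁿ such that the intersection σ ∩ τ has nonempty topological interior. Then the interior of σ ∪ τ equals (interior σ) ∪ (interior τ); in particular, no point of (frontier σ) ∩ (frontier τ) lies in the interior of σ ∪ τ. -/
/-- For closed convex cones `σ`, `τ` in `ℝⁿ` whose intersection has nonempty interior,
the interior of the union is the union of the interiors; in particular no point of
`frontier σ ∩ frontier τ` lies in the interior of `σ ∪ τ`. -/
theorem interior_union_of_closed_convex_cones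
    (n : ℕ) (σ τ : Set (Fin n → ℝ))
    (hσne : σ.Nonempty) (hτne : τ.Nonempty)
    (hσconv : Convex ℝ σ) (hτconv : Convex ℝ τ)
    (hσcone : ∀ c : ℝ, 0 < c → ∀ x ∈ σ, c • x ∈ σ)
    (hτcone : ∀ c : ℝ, 0 < c → ∀ x ∈ τ, c • x ∈ τ)
    (hσcl : IsClosed σ) (hτcl : IsClosed τ)
    (hint : (interior (σ ∩ τ)).Nonempty) :
    interior (σ ∪ τ) = interior σ ∪ interior τ ∧
      ∀ v ∈ frontier σ ∩ frontier τ, v ∉ interior (σ ∪ τ) := by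
  obtain ⟨z, hz⟩ := hint
  have hzσ : z ∈ interior σ := interior_mono Set.inter_subset_left hz
  have hzτ : z ∈ interior τ := interior_mono Set.inter_subset_right hz
  have key : interior (σ ∪ τ) = interior σ ∪ interior τ := by
    apply Set.Subset.antisymm
    · intro x hx
      by_cases hxz : x = z
      · left; rw [hxz]; exact hzσ
      obtain ⟨r, hr, hball⟩ := Metric.isOpen_iff.mp isOpen_interior x hx
      have hd0 : (0:ℝ) < dist x z := dist_pos.mpr hxz
      set ε : ℝ := r / (2 * dist x z) with hε
      have hε0 : 0 < ε := by positivity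
      set y := x + ε • (x - z) with hy
      have hyx : dist y x < r := by
        rw [hy, dist_eq_norm]
        simp only [add_sub_cancel_left, norm_smul, Real.norm_eq_abs, abs_of_pos hε0]
        have hnd : ‖x - z‖ = dist x z := (dist_eq_norm x z).symm
        rw [hnd, hε, div_mul_eq_mul_div]
        rw [div_lt_iff₀ (by positivity)]
        nlinarith
      have hy_mem : y ∈ σ ∪ τ :=
        interior_subset (hball (Metric.mem_ball.mpr hyx))
      have h1ε : (0:ℝ) < 1 + ε := by linarith
      have hxcombo : x = (ε/(1+ε)) • z + (1/(1+ε)) • y := by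
        rw [hy, smul_add, smul_smul, smul_sub]
        have h1 : (1/(1+ε)) * ε = ε/(1+ε) := by field_simp
        rw [h1]
        have : (ε/(1+ε)) • z + ((1/(1+ε)) • x + ((ε/(1+ε)) • x - (ε/(1+ε)) • z))
            = (1/(1+ε) + ε/(1+ε)) • x := by module
        rw [this]
        have : 1/(1+ε) + ε/(1+ε) = 1 := by field_simp
        rw [this, one_smul]
      have ha : (0:ℝ) < ε/(1+ε) := by positivity
      have hb : (0:ℝ) ≤ 1/(1+ε) := by positivity
      have hab : ε/(1+ε) + 1/(1+ε) = 1 := by field_simp; ring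
      cases hy_mem with
      | inl hyσ =>
        left
        rw [hxcombo]
        exact hσconv.combo_interior_self_mem_interior hzσ hyσ ha hb hab
      | inr hyτ =>
        right
        rw [hxcombo]
        exact hτconv.combo_interior_self_mem_interior hzτ hyτ ha hb hab
    · exact Set.union_subset (interior_mono Set.subset_union_left)
        (interior_mono Set.subset_union_right)
  refine ⟨key, ?_⟩
  intro v hv hmem
  rw [key] at hmem
  cases hmem with
  | inl h => exact hv.1.2 h
  | inr h => exact hv.2.2 h
end

section
/- Let A and B be nonempty closed convex subsets of a real normed vector space such that A ∪ B is not convex. Then there exist points v ∈ A and w ∈ B with v ≠ w such that the open segment joining v and w is disjoint from A ∪ B; moreover, v lies in the frontier of A and w lies in the frontier of B. -/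
open Set Filter

private lemma aux_seg
    {E : Type*} [NormedAddCommGroup E] [NormedSpace ℝ E]
    {A B : Set E}
    (hAcl : IsClosed A) (hBcl : IsClosed B)
    (hAconv : Convex ℝ A) (hBconv : Convex ℝ B)
    {x y z : E} (hx : x ∈ A) (hy : y ∈ B)
    (hz : z ∈ segment ℝ x y) (hzn : z ∉ A ∪ B) :
    ∃ v ∈ A, ∃ w ∈ B, v ≠ w ∧ openSegment ℝ v w ∩ (A ∪ B) = ∅ ∧
      v ∈ frontier A ∧ w ∈ frontier B := by
  classical
  have hxy : x ≠ y := by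
    rintro rfl
    rw [segment_same] at hz
    exact hzn (Or.inl (hz ▸ hx))
  set f : ℝ → E := fun t => (1 - t) • x + t • y with hf
  have hfc : Continuous f := by
    simp only [hf]; fun_prop
  have hcomb : ∀ p q s t : ℝ, p + q = 1 →
      f (p * s + q * t) = p • f s + q • f t := by
    intro p q s t hpq
    simp only [hf]
    have hq : q = 1 - p := by linarith
    subst hq
    module
  rw [segment_eq_image] at hz
  obtain ⟨t0, ht0I, hft0⟩ := hz
  have hft0 : f t0 = z := hft0
  set S : Set ℝ := Icc (0:ℝ) 1 ∩ f ⁻¹' A with hSdef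
  set T : Set ℝ := Icc (0:ℝ) 1 ∩ f ⁻¹' B with hTdef
  have hf0 : f 0 = x := by simp [hf]
  have hf1 : f 1 = y := by simp [hf]
  have hS0 : (0:ℝ) ∈ S := ⟨⟨le_refl 0, zero_le_one⟩, by simp [mem_preimage, hf0, hx]⟩
  have hT1 : (1:ℝ) ∈ T := ⟨⟨zero_le_one, le_refl 1⟩, by simp [mem_preimage, hf1, hy]⟩
  have hSne : S.Nonempty := ⟨0, hS0⟩
  have hTne : T.Nonempty := ⟨1, hT1⟩
  have hSbdd : BddAbove S := ⟨1, fun t ht => ht.1.2⟩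
  have hTbdd : BddBelow T := ⟨0, fun t ht => ht.1.1⟩
  have hScl : IsClosed S := isClosed_Icc.inter (hAcl.preimage hfc)
  have hTcl : IsClosed T := isClosed_Icc.inter (hBcl.preimage hfc)
  have hpreA : Convex ℝ (f ⁻¹' A) := by
    intro s hs t ht p q hp hq hpq
    simp only [mem_preimage] at hs ht ⊢
    rw [smul_eq_mul, smul_eq_mul, hcomb p q s t hpq]
    exact hAconv hs ht hp hq hpq
  have hpreB : Convex ℝ (f ⁻¹' B) := by
    intro s hs t ht p q hp hq hpq
    simp only [mem_preimage] at hs ht ⊢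
    rw [smul_eq_mul, smul_eq_mul, hcomb p q s t hpq]
    exact hBconv hs ht hp hq hpq
  have hSconv : Convex ℝ S := (convex_Icc 0 1).inter hpreA
  have hTconv : Convex ℝ T := (convex_Icc 0 1).inter hpreB
  set a : ℝ := sSup S with ha
  set b : ℝ := sInf T with hb
  have haS : a ∈ S := hScl.csSup_mem hSne hSbdd
  have hbT : b ∈ T := hTcl.csInf_mem hTne hTbdd
  have ht0S : t0 ∉ S := fun h => hzn (Or.inl (hft0 ▸ h.2))
  have ht0T : t0 ∉ T := fun h => hzn (Or.inr (hft0 ▸ h.2))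
  have hat0 : a < t0 := by
    by_contra hle
    push_neg at hle
    exact ht0S (hSconv.ordConnected.out hS0 haS ⟨ht0I.1, hle⟩)
  have ht0b : t0 < b := by
    by_contra hle
    push_neg at hle
    exact ht0T (hTconv.ordConnected.out hbT hT1 ⟨hle, ht0I.2⟩)
  have hab : a < b := lt_trans hat0 ht0b
  have key : ∀ t, a < t → t < b → f t ∉ A ∪ B := by
    intro t h1 h2 ht
    have htI : t ∈ Icc (0:ℝ) 1 :=
      ⟨le_of_lt (lt_of_le_of_lt haS.1.1 h1), le_trans h2.le hbT.1.2⟩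
    rcases ht with h | h
    · exact absurd (le_csSup hSbdd ⟨htI, h⟩) (not_le.2 h1)
    · exact absurd (csInf_le hTbdd ⟨htI, h⟩) (not_le.2 h2)
  have hvw : f a ≠ f b := by
    intro h
    apply hxy
    have h2 : (b - a) • (x - y) = ((1-a)•x + a•y) - ((1-b)•x + b•y) := by module
    rw [show ((1-a)•x + a•y) = f a from rfl, show ((1-b)•x + b•y) = f b from rfl,
      h, sub_self] at h2
    rcases smul_eq_zero.mp h2 with h3 | h3
    · exact absurd (sub_eq_zero.mp h3) hab.ne'
    · exact sub_eq_zero.mp h3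
  have hseg : openSegment ℝ (f a) (f b) ∩ (A ∪ B) = ∅ := by
    rw [eq_empty_iff_forall_notMem]
    rintro p ⟨hp1, hp2⟩
    rw [openSegment_eq_image] at hp1
    obtain ⟨θ, hθ, rfl⟩ := hp1
    have hp2' : (1-θ) • f a + θ • f b ∈ A ∪ B := hp2
    rw [← hcomb (1-θ) θ a b (by ring)] at hp2'
    refine key _ ?_ ?_ hp2'
    · nlinarith [mul_pos hθ.1 (sub_pos.2 hab)]
    · nlinarith [mul_pos (sub_pos.2 hθ.2) (sub_pos.2 hab)]
  have hfrA : f a ∈ frontier A := by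
    rw [frontier]
    refine ⟨subset_closure haS.2, fun hint => ?_⟩
    have hmem : f ⁻¹' interior A ∈ nhds a :=
      hfc.continuousAt.preimage_mem_nhds (isOpen_interior.mem_nhds hint)
    have h3 : (f ⁻¹' interior A ∩ Iio b ∩ Ioi a) ∈ nhdsWithin a (Ioi a) :=
      inter_mem (nhdsWithin_le_nhds (inter_mem hmem (Iio_mem_nhds hab)))
        self_mem_nhdsWithin
    obtain ⟨t, ⟨htA, htb⟩, hta⟩ := Filter.nonempty_of_mem h3
    exact key t hta htb (Or.inl (interior_subset htA))
  have hfrB : f b ∈ frontier B := by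
    rw [frontier]
    refine ⟨subset_closure hbT.2, fun hint => ?_⟩
    have hmem : f ⁻¹' interior B ∈ nhds b :=
      hfc.continuousAt.preimage_mem_nhds (isOpen_interior.mem_nhds hint)
    have h3 : (f ⁻¹' interior B ∩ Ioi a ∩ Iio b) ∈ nhdsWithin b (Iio b) :=
      inter_mem (nhdsWithin_le_nhds (inter_mem hmem (Ioi_mem_nhds hab)))
        self_mem_nhdsWithin
    obtain ⟨t, ⟨htB, hta⟩, htb⟩ := Filter.nonempty_of_mem h3
    exact key t hta htb (Or.inr (interior_subset htB))
  exact ⟨f a, haS.2, f b, hbT.2, hvw, hseg, hfrA, hfrB⟩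

/-- If `A` and `B` are nonempty closed convex subsets of a real normed vector space whose
union is not convex, then there are distinct points `v ∈ A`, `w ∈ B` such that the open
segment from `v` to `w` misses `A ∪ B`; moreover `v ∈ frontier A` and `w ∈ frontier B`. -/
theorem exists_segment_avoiding_nonconvex_union
    (E : Type*) [NormedAddCommGroup E] [NormedSpace ℝ E]
    (A B : Set E) (hAne : A.Nonempty) (hBne : B.Nonempty)
    (hAcl : IsClosed A) (hBcl : IsClosed B)
    (hAconv : Convex ℝ A) (hBconv : Convex ℝ B)
    (hnot : ¬ Convex ℝ (A ∪ B)) :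
    ∃ v ∈ A, ∃ w ∈ B, v ≠ w ∧ openSegment ℝ v w ∩ (A ∪ B) = ∅ ∧
      v ∈ frontier A ∧ w ∈ frontier B := by
  rw [convex_iff_segment_subset] at hnot
  push_neg at hnot
  obtain ⟨x, hx, y, hy, hns⟩ := hnot
  obtain ⟨z, hz, hzn⟩ := not_subset.mp hns
  rcases hx with hxA | hxB <;> rcases hy with hyA | hyB
  · exact absurd (Or.inl (hAconv.segment_subset hxA hyA hz)) hzn
  · exact aux_seg hAcl hBcl hAconv hBconv hxA hyB hz hzn
  · have hzn' : z ∉ B ∪ A := by rwa [union_comm]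
    obtain ⟨v, hv, w, hw, hne, hsegm, hfv, hfw⟩ :=
      aux_seg hBcl hAcl hBconv hAconv hxB hyA hz hzn'
    refine ⟨w, hw, v, hv, hne.symm, ?_, hfw, hfv⟩
    rwa [openSegment_symm, union_comm]
  · exact absurd (Or.inr (hBconv.segment_subset hxB hyB hz)) hzn
end

section
/- Let k be an algebraically closed field, let B ⊆ 𝔸² × ℙ¹ be the blow-up of the affine plane 𝔸² at the origin, i.e. the closed subvariety {((x,y),[a:b]) : x·b = y·a}, and let ∞ := ((0,0),[0:1]) be the point of the exceptional line corresponding to the second coordinate axis. Then the morphism p : B ∖ {∞} → 𝔸² induced by the projection to 𝔸² is surjective, but p does not satisfy the curve covering property: for the irreducible curve Y' = {x = 0} ⊆ 𝔸² and the closed point y = (0,0) ∈ Y', there is no irreducible curve X' ⊆ B ∖ {∞} with y ∈ p(X') ⊆ Y' and p(X') dense in Y'. In particular, p is surjective but not submersive. -/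
universe u

noncomputable section

/-- The affine plane `𝔸²` over `k` (classical points). -/
structure Plane (k : Type u) where
  x : k
  y : k

/-- The Zariski vanishing locus in the plane of a polynomial in two variables. -/
def planeLocus (k : Type u) [Field k] (f : MvPolynomial (Fin 2) k) : Set (Plane k) :=
  {p | MvPolynomial.eval ![p.x, p.y] f = 0}

/-- The Zariski topology on the affine plane. -/
instance (k : Type u) [Field k] : TopologicalSpace (Plane k) :=
  .generateFrom {U | ∃ f : MvPolynomial (Fin 2) k, U = (planeLocus k f)ᶜ}

/-- The classical points of `𝔸² × ℙ¹` over `k`. -/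
structure ProdSpace (k : Type u) [Field k] where
  plane : Plane k
  line : Projectivization k (k × k)

/-- The vanishing locus in `𝔸² × ℙ¹` of a polynomial in the variables `x, y, a, b`
(the locus of points all of whose homogeneous representatives are zeros; for a
polynomial bihomogeneous in `(a, b)` this is the usual vanishing locus). -/
def biLocus (k : Type u) [Field k] (f : MvPolynomial (Fin 4) k) : Set (ProdSpace k) :=
  {q | ∀ (w : k × k) (hw : w ≠ 0), Projectivization.mk k w hw = q.line →
    MvPolynomial.eval ![q.plane.x, q.plane.y, w.1, w.2] f = 0}

/-- The Zariski topology on `𝔸² × ℙ¹`. -/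
instance (k : Type u) [Field k] : TopologicalSpace (ProdSpace k) :=
  .generateFrom {U | ∃ f : MvPolynomial (Fin 4) k, U = (biLocus k f)ᶜ}

/-- The blow-up `B ⊆ 𝔸² × ℙ¹` of the affine plane at the origin:
the closed set `{((x,y),[a:b]) : x·b = y·a}`. -/
def blowUpSet (k : Type u) [Field k] : Set (ProdSpace k) :=
  biLocus k (MvPolynomial.X 0 * MvPolynomial.X 3 - MvPolynomial.X 1 * MvPolynomial.X 2)

/-- The point `∞ = ((0,0),[0:1])` of the exceptional line. -/
def inftyPoint (k : Type u) [Field k] : ProdSpace k :=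
  ⟨⟨0, 0⟩, Projectivization.mk k ((0 : k), (1 : k))
    (fun h => one_ne_zero (congrArg Prod.snd h))⟩

/-- `B ∖ {∞}`, with the subspace Zariski topology. -/
def BlowUpMinusInfty (k : Type u) [Field k] : Type u :=
  {q : ProdSpace k // q ∈ blowUpSet k ∧ q ≠ inftyPoint k}

instance (k : Type u) [Field k] : TopologicalSpace (BlowUpMinusInfty k) :=
  instTopologicalSpaceSubtype

/-- The projection `p : B ∖ {∞} → 𝔸²`. -/
def blowDown (k : Type u) [Field k] : BlowUpMinusInfty k → Plane k :=
  fun q => q.val.plane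

/-- A curve: a closed irreducible subset of topological Krull dimension `1`. -/
def IsIrreducibleCurve {X : Type u} [TopologicalSpace X] (C : Set X) : Prop :=
  IsClosed C ∧ IsIrreducible C ∧ topologicalKrullDim C = 1

/-- The curve covering property of a map of topological spaces. -/
def CurveCoveringProperty {X Y : Type u} [TopologicalSpace X] [TopologicalSpace Y]
    (p : X → Y) : Prop :=
  ∀ C : Set Y, IsIrreducibleCurve C → ∀ y ∈ C, IsClosed ({y} : Set Y) →
    ∃ C' : Set X, IsIrreducibleCurve C' ∧ y ∈ p '' C' ∧
      p '' C' ⊆ C ∧ C ⊆ closure (p '' C')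

/-- The coordinate axis `{x = 0} ⊆ 𝔸²`. -/
def yAxis (k : Type u) [Field k] : Set (Plane k) := {p | p.x = 0}

/-- The origin of `𝔸²`. -/
def originPlane (k : Type u) [Field k] : Plane k := ⟨0, 0⟩

/-! Over a point `(0, y)` with `y ≠ 0` the blow-up equation `x b = y a` forces `a = 0`, and over
the origin `a = 0` singles out the removed point `∞`. Hence `p⁻¹({x = 0} ∖ {0})` is closed in
`B ∖ {∞}`, whereas `{x = 0} ∖ {0}` is not closed in `𝔸²`, so `p` is not submersive. An
irreducible `X'` mapping into the `y`-axis is covered by the closed sets `p⁻¹({x = 0} ∖ {0})` and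
`p⁻¹(0)`, so it lies in one of them: then either `0 ∉ p(X')` or `p(X') = {0}`, which is not dense.
The `y`-axis is a curve because `y ↦ (0, y)` identifies it with `k` in the cofinite topology. -/

open MvPolynomial Topology

attribute [ext] Plane ProdSpace

theorem topologicalKrullDim_cofiniteTopology (X : Type*) [Infinite X] :
    topologicalKrullDim (CofiniteTopology X) = 1 := by
  apply le_antisymm
  · rw [topologicalKrullDim, Order.krullDim_le_one_iff]
    intro Z
    rcases CofiniteTopology.isClosed_iff.mp Z.isClosed with hZ | hZ
    · refine Or.inr fun W _ => ?_
      rw [← SetLike.coe_subset_coe, hZ]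
      exact Set.subset_univ _
    · refine Or.inl fun W hWZ => ?_
      have hZ₁ := hZ.isDiscrete.subsingleton_of_isPreirreducible Z.isIrreducible.isPreirreducible
      obtain ⟨w, hw⟩ := W.isIrreducible.nonempty
      intro z hz
      rwa [hZ₁ hz (hWZ hw)]
  · rw [topologicalKrullDim, Order.one_le_krullDim_iff]
    obtain ⟨x, y, hxy⟩ := exists_pair_ne (CofiniteTopology X)
    refine ⟨{x}, ⟨Set.univ, IrreducibleSpace.isIrreducible_univ _, isClosed_univ⟩,
      SetLike.lt_iff_le_and_exists.mpr ⟨fun _ _ => trivial, y, trivial, ?_⟩⟩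
    simpa [eq_comm] using hxy

theorem IsPreirreducible.image_subset_singleton_of_isClosed_preimage_diff
    {X Y : Type*} [TopologicalSpace X] [TopologicalSpace Y] {f : X → Y} (hf : Continuous f)
    {C : Set X} (hC : IsPreirreducible C) {S : Set Y} {y : Y} (hy : IsClosed {y})
    (hS : IsClosed (f ⁻¹' (S \ {y}))) (hCS : f '' C ⊆ S) (hyC : y ∈ f '' C) :
    f '' C ⊆ {y} := by
  have hcover : C ⊆ f ⁻¹' (S \ {y}) ∪ f ⁻¹' {y} := fun x hx => by
    by_cases hxy : f x = y
    · exact Or.inr hxy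
    · exact Or.inl ⟨hCS ⟨x, hx, rfl⟩, hxy⟩
  rcases isPreirreducible_iff_isClosed_union_isClosed.mp hC _ _ hS (hy.preimage hf) hcover
    with hC' | hC'
  · obtain ⟨x, hx, rfl⟩ := hyC
    exact absurd rfl (hC' hx).2
  · exact Set.image_subset_iff.mpr hC'

variable {k : Type u} [Field k]

theorem isClosed_planeLocus (f : MvPolynomial (Fin 2) k) : IsClosed (planeLocus k f) :=
  isOpen_compl_iff.mp (TopologicalSpace.isOpen_generateFrom_of_mem ⟨f, rfl⟩)

theorem isClosed_biLocus (f : MvPolynomial (Fin 4) k) : IsClosed (biLocus k f) :=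
  isOpen_compl_iff.mp (TopologicalSpace.isOpen_generateFrom_of_mem ⟨f, rfl⟩)

instance : T1Space (Plane k) := by
  refine ⟨fun p => ?_⟩
  convert (isClosed_planeLocus (X 0 - C p.x)).inter (isClosed_planeLocus (X 1 - C p.y))
  ext ⟨x, y⟩
  simp [planeLocus, sub_eq_zero, Plane.ext_iff]

theorem eval_aeval_yAxis (f : MvPolynomial (Fin 2) k) (y : k) :
    (aeval ![0, Polynomial.X] f).eval y = eval ![0, y] f := by
  induction f using MvPolynomial.induction_on with
  | C a => simp
  | add p q hp hq => simp [hp, hq]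
  | mul_X p i hp => fin_cases i <;> simp [hp]

theorem isClosed_yAxis : IsClosed (yAxis k) := by
  convert isClosed_planeLocus (k := k) (X 0)
  ext p
  simp [yAxis, planeLocus]

def yAxisParam (k : Type u) [Field k] : CofiniteTopology k → Plane k :=
  fun y => ⟨0, CofiniteTopology.of.symm y⟩

theorem range_yAxisParam : Set.range (yAxisParam k) = yAxis k := by
  ext p
  constructor
  · rintro ⟨y, rfl⟩
    rfl
  · intro hp
    exact ⟨CofiniteTopology.of p.y, Plane.ext hp.symm rfl⟩

theorem continuous_yAxisParam : Continuous (yAxisParam k) := by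
  refine continuous_generateFrom_iff.mpr ?_
  rintro _ ⟨f, rfl⟩
  rw [CofiniteTopology.isOpen_iff]
  rintro ⟨y₀, hy₀⟩
  have hf : aeval ![0, Polynomial.X] f ≠ 0 := fun h =>
    hy₀ (by rw [planeLocus, Set.mem_ofPred_eq, yAxisParam, ← eval_aeval_yAxis, h,
      Polynomial.eval_zero])
  refine ((Polynomial.finite_setOfPred_isRoot hf).preimage
    CofiniteTopology.of.symm.injective.injOn).subset fun y hy => ?_
  simpa [yAxisParam, planeLocus, Polynomial.IsRoot, eval_aeval_yAxis] using hy

theorem isClosedEmbedding_yAxisParam : IsClosedEmbedding (yAxisParam k) := by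
  refine .of_continuous_injective_isClosedMap continuous_yAxisParam
    (fun y z h => CofiniteTopology.of.symm.injective (congrArg Plane.y h)) fun s hs => ?_
  rcases CofiniteTopology.isClosed_iff.mp hs with rfl | hs
  · rw [Set.image_univ, range_yAxisParam]
    exact isClosed_yAxis
  · exact (hs.image _).isClosed

theorem isIrreducible_yAxis [Infinite k] : IsIrreducible (yAxis k) := by
  rw [← range_yAxisParam, ← Set.image_univ]
  exact (IrreducibleSpace.isIrreducible_univ _).image _ continuous_yAxisParam.continuousOn

theorem topologicalKrullDim_yAxis [Infinite k] : topologicalKrullDim (yAxis k) = 1 := by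
  rw [← range_yAxisParam, ← topologicalKrullDim_cofiniteTopology k]
  exact (isClosedEmbedding_yAxisParam.isEmbedding.toHomeomorph.isHomeomorph
    |>.topologicalKrullDim_eq).symm

theorem isIrreducibleCurve_yAxis [Infinite k] : IsIrreducibleCurve (yAxis k) :=
  ⟨isClosed_yAxis, isIrreducible_yAxis, topologicalKrullDim_yAxis⟩

theorem not_isClosed_yAxis_diff_origin [Infinite k] :
    ¬ IsClosed (yAxis k \ {originPlane k}) := by
  have h : yAxis k \ {originPlane k} = yAxisParam k '' {CofiniteTopology.of 0}ᶜ := by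
    rw [Set.compl_eq_univ_sdiff, Set.image_sdiff isClosedEmbedding_yAxisParam.injective,
      Set.image_univ, range_yAxisParam, Set.image_singleton]
    rfl
  rw [h, ← isClosedEmbedding_yAxisParam.isClosed_iff_image_isClosed,
    CofiniteTopology.isClosed_iff, not_or]
  exact ⟨fun huniv => (huniv.symm ▸ Set.mem_univ (CofiniteTopology.of (0 : k))) rfl,
    (Set.finite_singleton _).infinite_compl⟩

theorem plane_preimage_planeLocus (f : MvPolynomial (Fin 2) k) :
    ProdSpace.plane ⁻¹' planeLocus k f = biLocus k (rename ![0, 1] f) := by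
  have hcomp (q : ProdSpace k) (w : k × k) : eval ![q.plane.x, q.plane.y, w.1, w.2]
      (rename ![0, 1] f) = eval ![q.plane.x, q.plane.y] f := by
    rw [eval_rename]
    exact congrArg (eval · f) (funext fun i => by fin_cases i <;> rfl)
  ext q
  refine ⟨fun hq w _ _ => (hcomp q w).trans hq, fun hq => ?_⟩
  exact (hcomp q _).symm.trans (hq q.line.rep q.line.rep_nonzero q.line.mk_rep)

theorem continuous_blowDown : Continuous (blowDown k) := by
  refine .comp (continuous_generateFrom_iff.mpr ?_) continuous_subtype_val
  rintro _ ⟨f, rfl⟩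
  rw [Set.preimage_compl, plane_preimage_planeLocus]
  exact (isClosed_biLocus _).isOpen_compl

theorem mk_eq_inftyPoint_line {w : k × k} (hw : w ≠ 0) (h : w.1 = 0) :
    Projectivization.mk k w hw = (inftyPoint k).line := by
  have hw₂ : w.2 ≠ 0 := fun h₂ => hw (Prod.ext h h₂)
  refine (Projectivization.mk_eq_mk_iff _ _ _ _ _).mpr ⟨Units.mk0 w.2 hw₂, ?_⟩
  ext <;> simp [Units.smul_def, h]

theorem blowDown_preimage_yAxis_diff_origin :
    blowDown k ⁻¹' (yAxis k \ {originPlane k}) =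
      {q | q.val ∈ biLocus k (X 2)} ∩ blowDown k ⁻¹' yAxis k := by
  ext ⟨⟨⟨x, y⟩, l⟩, hB, hne⟩
  change (x = 0 ∧ ¬ (⟨x, y⟩ : Plane k) = ⟨0, 0⟩) ↔
    (∀ w hw, Projectivization.mk k w hw = l → eval ![x, y, w.1, w.2] (X 2) = 0) ∧ x = 0
  simp only [eval_X]
  constructor
  · rintro ⟨rfl, hy⟩
    refine ⟨fun w hw hl => ?_, rfl⟩
    have hy : y ≠ 0 := fun h => hy (by rw [h])
    simpa [hy] using hB w hw hl
  · rintro ⟨ha, rfl⟩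
    refine ⟨rfl, fun hy => hne ?_⟩
    cases hy
    exact ProdSpace.ext rfl (l.mk_rep ▸ mk_eq_inftyPoint_line _ (ha _ _ l.mk_rep))

theorem isClosed_blowDown_preimage_yAxis_diff_origin :
    IsClosed (blowDown k ⁻¹' (yAxis k \ {originPlane k})) := by
  rw [blowDown_preimage_yAxis_diff_origin]
  exact ((isClosed_biLocus _).preimage continuous_subtype_val).inter
    (isClosed_yAxis.preimage continuous_blowDown)

theorem blowDown_surjective : Function.Surjective (blowDown k) := by
  rintro ⟨x, y⟩
  by_cases h : (x, y) = (0 : k × k)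
  · obtain ⟨rfl, rfl⟩ := Prod.mk_eq_zero.mp h
    refine ⟨⟨⟨⟨0, 0⟩, Projectivization.mk k (1, 0) (by simp)⟩, fun w _ _ => by simp, ?_⟩, rfl⟩
    intro hinf
    obtain ⟨a, ha⟩ := (Projectivization.mk_eq_mk_iff _ _ _ _ _).mp (congrArg ProdSpace.line hinf)
    simpa [Units.smul_def] using congrArg Prod.fst ha
  · refine ⟨⟨⟨⟨x, y⟩, Projectivization.mk k (x, y) h⟩, fun w _ hw => ?_, fun hinf => h ?_⟩, rfl⟩
    · obtain ⟨a, rfl⟩ := (Projectivization.mk_eq_mk_iff _ _ _ _ _).mp hw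
      simpa [Units.smul_def] using (by ring : x * ((a : k) * y) - y * ((a : k) * x) = 0)
    · have hplane := congrArg ProdSpace.plane hinf
      exact Prod.mk_eq_zero.mpr ⟨congrArg Plane.x hplane, congrArg Plane.y hplane⟩

/-- The projection `p : B ∖ {∞} → 𝔸²` from the blow-up of `𝔸²` at the origin minus the
point `∞ = ((0,0),[0:1])` is surjective, but fails the curve covering property: for the
irreducible curve `Y' = {x = 0}` and the closed point `y = (0,0) ∈ Y'` there is no
irreducible curve `X' ⊆ B ∖ {∞}` with `y ∈ p(X') ⊆ Y'` and `p(X')` dense in `Y'`.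
In particular `p` is surjective but not submersive. -/
theorem blowDown_not_curve_covering (k : Type u) [Field k] [IsAlgClosed k] :
    Function.Surjective (blowDown k) ∧
    IsIrreducibleCurve (yAxis k) ∧
    originPlane k ∈ yAxis k ∧
    IsClosed ({originPlane k} : Set (Plane k)) ∧
    ¬ (∃ C' : Set (BlowUpMinusInfty k), IsIrreducibleCurve C' ∧
        originPlane k ∈ blowDown k '' C' ∧ blowDown k '' C' ⊆ yAxis k ∧
        yAxis k ⊆ closure (blowDown k '' C')) ∧
    ¬ CurveCoveringProperty (blowDown k) ∧
    ¬ Topology.IsQuotientMap (blowDown k) := by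
  have hno_curve : ¬ ∃ C' : Set (BlowUpMinusInfty k), IsIrreducibleCurve C' ∧
      originPlane k ∈ blowDown k '' C' ∧ blowDown k '' C' ⊆ yAxis k ∧
      yAxis k ⊆ closure (blowDown k '' C') := by
    rintro ⟨C', ⟨-, hC', -⟩, hoC', hC'y, hdense⟩
    have him := hC'.isPreirreducible.image_subset_singleton_of_isClosed_preimage_diff
      continuous_blowDown isClosed_singleton isClosed_blowDown_preimage_yAxis_diff_origin hC'y hoC'
    have hy : yAxis k ⊆ {originPlane k} := hdense.trans (closure_minimal him isClosed_singleton)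
    exact zero_ne_one (congrArg Plane.y (hy (show ⟨0, 1⟩ ∈ yAxis k from rfl))).symm
  refine ⟨blowDown_surjective, isIrreducibleCurve_yAxis, rfl, isClosed_singleton, hno_curve,
    fun h => hno_curve (h _ isIrreducibleCurve_yAxis _ rfl isClosed_singleton), fun h => ?_⟩
  exact not_isClosed_yAxis_diff_origin
    (h.isClosed_preimage.mp isClosed_blowDown_preimage_yAxis_diff_origin)
end
end
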